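/- arXiv:1709.06966 — 2 statements merged into one kernel-verified Lean document; each statement's English description precedes it below -/
import Mathlib

section
/- Let α ∈ [0,1). Then there exists a constant C, depending only on α, such that for all 0 < t₁ < t₂ one has ∫₀^{t₁} ( ∫_ℝ |G_{t₂−s}(x) − G_{t₁−s}(x)| · |x|^{α} dx )² ds ≤ C (t₂ − t₁)^{1+α}. -/
open MeasureTheory Real Filter

/-- The heat kernel on `ℝ`: `G t x = (4πt)^(-1/2) exp(-x²/(4t))`. -/
noncomputable def G (t x : ℝ) : ℝ :=
  (4 * Real.pi * t) ^ (-(1:ℝ)/2) * Real.exp (-x ^ 2 / (4 * t))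

/-!
Write `u = t₁ - s` and `δ = t₂ - t₁`. The inner integral is at most `C δ max(u, δ)^(α/2 - 1)`.
For `u ≤ δ` this follows from the triangle inequality and the scaling of the moments,
`∫ G_t(x) |x|^s dx = c_s t^(s/2)`. For `u ≥ δ` one uses the mean value theorem in time:
on `[u, 2u]`, `|∂_t G_t(x)| ≤ √2 G_{2u}(x) (x²/(4u²) + 1/(2u))`, whose `|x|^α`-moment is
`O(u^(α/2 - 1))`. Squaring and integrating in `u`, the bound `∫₀^∞ max(u, δ)^(α-2) du = O(δ^(α-1))`
(valid since `α < 1`) gives `δ² δ^(α-1) = δ^(1+α)`.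
-/

open Set

lemma integrable_comp_abs_of_integrableOn_Ioi {f : ℝ → ℝ} (hf : IntegrableOn f (Ioi 0)) :
    Integrable fun x : ℝ => f |x| := by
  have hIoi : IntegrableOn (fun x : ℝ => f |x|) (Ioi 0) :=
    hf.congr_fun (fun x hx => by rw [abs_of_pos hx]) measurableSet_Ioi
  have hIic : IntegrableOn (fun x : ℝ => f |x|) (Iic 0) := by
    have hneg : MeasurableEmbedding fun x : ℝ => -x := (Homeomorph.neg ℝ).measurableEmbedding
    rw [← Measure.map_neg_eq_self (volume : Measure ℝ), hneg.integrableOn_map_iff]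
    simp_rw [Function.comp_def, abs_neg, neg_preimage, neg_Iic, neg_zero]
    exact (integrableOn_Ici_iff_integrableOn_Ioi).mpr hIoi
  simpa only [Iic_union_Ioi, integrableOn_univ] using hIic.union hIoi

lemma integrable_abs_rpow_mul_exp_neg_mul_sq {b s : ℝ} (hb : 0 < b) (hs : -1 < s) :
    Integrable fun x : ℝ => |x| ^ s * exp (-b * x ^ 2) := by
  simpa only [sq_abs] using
    integrable_comp_abs_of_integrableOn_Ioi (integrableOn_rpow_mul_exp_neg_mul_sq hb hs)

lemma integral_abs_rpow_mul_exp_neg_mul_sq {b s : ℝ} (hb : 0 < b) (hs : -1 < s) :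
    ∫ x : ℝ, |x| ^ s * exp (-b * x ^ 2) = b ^ (-(s + 1) / 2) * Gamma ((s + 1) / 2) := by
  have h := integral_comp_abs (f := fun x : ℝ => x ^ s * exp (-b * x ^ (2:ℝ)))
  simp only [rpow_two, sq_abs] at h
  have hΓ := integral_rpow_mul_exp_neg_mul_rpow two_pos hs hb
  simp only [rpow_two] at hΓ
  rw [h, hΓ]
  ring

lemma G_pos {t : ℝ} (ht : 0 < t) (x : ℝ) : 0 < G t x := by
  unfold G; positivity

lemma G_mul_abs_rpow_eq {t : ℝ} (x s : ℝ) :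
    G t x * |x| ^ s = (4 * π * t) ^ (-(1:ℝ)/2) * (|x| ^ s * exp (-(4 * t)⁻¹ * x ^ 2)) := by
  rw [G, show -x ^ 2 / (4 * t) = -(4 * t)⁻¹ * x ^ 2 by ring]
  ring

noncomputable def heatMoment (s : ℝ) : ℝ :=
  (4 * π) ^ (-(1:ℝ)/2) * 4 ^ ((s + 1) / 2) * Gamma ((s + 1) / 2)

lemma heatMoment_nonneg {s : ℝ} (hs : -1 < s) : 0 ≤ heatMoment s := by
  have := Gamma_pos_of_pos (show 0 < (s + 1) / 2 by linarith)
  unfold heatMoment; positivity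

lemma integrable_G_mul_abs_rpow {t s : ℝ} (ht : 0 < t) (hs : -1 < s) :
    Integrable fun x => G t x * |x| ^ s := by
  simp_rw [G_mul_abs_rpow_eq]
  exact (integrable_abs_rpow_mul_exp_neg_mul_sq (by positivity) hs).const_mul _

lemma integral_G_mul_abs_rpow {t s : ℝ} (ht : 0 < t) (hs : -1 < s) :
    ∫ x, G t x * |x| ^ s = heatMoment s * t ^ (s / 2) := by
  simp_rw [G_mul_abs_rpow_eq]
  rw [integral_const_mul, integral_abs_rpow_mul_exp_neg_mul_sq (by positivity) hs,
    inv_rpow (by positivity), ← rpow_neg (by positivity),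
    show -(-(s + 1) / 2) = (s + 1) / 2 by ring,
    mul_rpow (by positivity) ht.le, mul_rpow (by norm_num) ht.le, heatMoment]
  have ht' : t ^ (-(1:ℝ)/2) * t ^ ((s + 1) / 2) = t ^ (s / 2) := by
    rw [← rpow_add ht]; ring_nf
  linear_combination (4 * π) ^ (-(1:ℝ)/2) * 4 ^ ((s + 1) / 2) * Gamma ((s + 1) / 2) * ht'

lemma hasDerivAt_G (x : ℝ) {t : ℝ} (ht : 0 < t) :
    HasDerivAt (fun τ => G τ x) (G t x * (x ^ 2 / (4 * t ^ 2) - 1 / (2 * t))) t := by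
  have hpos : 0 < 4 * π * t := by positivity
  have hpow : HasDerivAt (fun τ => (4 * π * τ) ^ (-(1:ℝ)/2))
      (4 * π * (-(1:ℝ)/2) * (4 * π * t) ^ (-(1:ℝ)/2 - 1)) t := by
    simpa using ((hasDerivAt_id t).const_mul (4 * π)).rpow_const (p := -(1:ℝ)/2)
      (Or.inl hpos.ne')
  have hexp : HasDerivAt (fun τ => exp (-x ^ 2 / (4 * τ)))
      (exp (-x ^ 2 / (4 * t)) * (x ^ 2 / (4 * t ^ 2))) t := by
    refine ((hasDerivAt_const t (-x ^ 2)).div ((hasDerivAt_id t).const_mul 4)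
      (by positivity)).exp.congr_deriv ?_
    simp only [Pi.div_apply, id]
    field_simp
    ring_nf
  refine (hpow.mul hexp).congr_deriv ?_
  rw [G, rpow_sub_one hpos.ne']
  field_simp
  ring

lemma G_le_sqrt_div_mul_G {t t' : ℝ} (ht : 0 < t) (htt' : t ≤ t') (x : ℝ) :
    G t x ≤ √(t' / t) * G t' x := by
  have ht' : 0 < t' := ht.trans_le htt'
  have hprefactor : (4 * π * t) ^ (-(1:ℝ)/2) = √(t' / t) * (4 * π * t') ^ (-(1:ℝ)/2) := by
    rw [neg_div, rpow_neg (by positivity), rpow_neg (by positivity), ← sqrt_eq_rpow,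
      ← sqrt_eq_rpow, sqrt_div' _ ht.le, sqrt_mul' _ ht.le, sqrt_mul' _ ht'.le]
    field_simp
  rw [G, G, hprefactor, mul_assoc]
  gcongr 2
  rw [exp_le_exp, neg_div, neg_div, neg_le_neg_iff]
  gcongr

lemma abs_G_add_sub_G_le {u δ : ℝ} (hu : 0 < u) (hδ : 0 ≤ δ) (hδu : δ ≤ u) (x : ℝ) :
    |G (u + δ) x - G u x| ≤ δ * (√2 * G (2 * u) x * (x ^ 2 / (4 * u ^ 2) + 1 / (2 * u))) := by
  have hderiv_le : ∀ t ∈ Icc u (u + δ), ‖G t x * (x ^ 2 / (4 * t ^ 2) - 1 / (2 * t))‖ ≤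
      √2 * G (2 * u) x * (x ^ 2 / (4 * u ^ 2) + 1 / (2 * u)) := by
    rintro t ⟨hut, htu⟩
    have ht : 0 < t := hu.trans_le hut
    have hG2u : 0 < G (2 * u) x := G_pos (by positivity) x
    have hG : G t x ≤ √2 * G (2 * u) x := by
      refine (G_le_sqrt_div_mul_G (t' := 2 * u) ht (by linarith) x).trans ?_
      refine mul_le_mul_of_nonneg_right ?_ hG2u.le
      gcongr
      rw [div_le_iff₀ ht]; linarith
    have hrate : |x ^ 2 / (4 * t ^ 2) - 1 / (2 * t)| ≤ x ^ 2 / (4 * u ^ 2) + 1 / (2 * u) := by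
      refine (abs_sub _ _).trans ?_
      rw [abs_of_nonneg (by positivity), abs_of_nonneg (by positivity)]
      gcongr
    rw [norm_mul, norm_of_nonneg (G_pos ht x).le, norm_eq_abs]
    exact mul_le_mul hG hrate (abs_nonneg _) (by positivity)
  have hmvt := (convex_Icc u (u + δ)).norm_image_sub_le_of_norm_hasDerivWithin_le
    (fun t ht => (hasDerivAt_G x (hu.trans_le ht.1)).hasDerivWithinAt) hderiv_le
    (left_mem_Icc.2 (by linarith)) (right_mem_Icc.2 (by linarith))
  rw [norm_eq_abs, norm_eq_abs, add_sub_cancel_left, abs_of_nonneg hδ] at hmvt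
  linarith

lemma integral_abs_G_add_sub_G_mul_le_of_le {α u δ : ℝ} (hα : 0 ≤ α) (hu : 0 < u)
    (huδ : u ≤ δ) :
    ∫ x, |G (u + δ) x - G u x| * |x| ^ α ≤ 2 * heatMoment α * (2 * δ) ^ (α / 2) := by
  have hα' : -1 < α := by linarith
  have huδ' : 0 < u + δ := by linarith
  have hint₁ := integrable_G_mul_abs_rpow huδ' hα'
  have hint₂ := integrable_G_mul_abs_rpow hu hα'
  have hM := heatMoment_nonneg hα'
  calc ∫ x, |G (u + δ) x - G u x| * |x| ^ α
      ≤ ∫ x, (G (u + δ) x * |x| ^ α + G u x * |x| ^ α) := by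
        refine integral_mono_of_nonneg (.of_forall fun x => by positivity) (hint₁.add hint₂)
          (.of_forall fun x => ?_)
        have := abs_sub (G (u + δ) x) (G u x)
        rw [abs_of_pos (G_pos huδ' x), abs_of_pos (G_pos hu x)] at this
        simp only [← add_mul]
        gcongr
    _ = heatMoment α * (u + δ) ^ (α / 2) + heatMoment α * u ^ (α / 2) := by
        rw [integral_add hint₁ hint₂, integral_G_mul_abs_rpow huδ' hα',
          integral_G_mul_abs_rpow hu hα']
    _ ≤ heatMoment α * (2 * δ) ^ (α / 2) + heatMoment α * (2 * δ) ^ (α / 2) := by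
        gcongr <;> linarith
    _ = 2 * heatMoment α * (2 * δ) ^ (α / 2) := by ring

lemma integral_abs_G_add_sub_G_mul_le_of_ge {α u δ : ℝ} (hα : -1 < α) (hu : 0 < u)
    (hδ : 0 ≤ δ) (hδu : δ ≤ u) :
    ∫ x, |G (u + δ) x - G u x| * |x| ^ α ≤
      √2 * 2 ^ (α / 2) * (heatMoment (α + 2) + heatMoment α) / 2 * δ * u ^ (α / 2 - 1) := by
  have hα2 : -1 < α + 2 := by linarith
  have h2u : 0 < 2 * u := by positivity
  set c₁ := δ * √2 / (4 * u ^ 2)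
  set c₂ := δ * √2 / (2 * u)
  have hint₁ := (integrable_G_mul_abs_rpow h2u hα2).const_mul c₁
  have hint₂ := (integrable_G_mul_abs_rpow h2u hα).const_mul c₂
  have hpow : (2 * u) ^ ((α + 2) / 2) = 2 ^ (α / 2) * u ^ (α / 2) * (2 * u) := by
    rw [show (α + 2) / 2 = α / 2 + 1 by ring, rpow_add_one h2u.ne', mul_rpow zero_le_two hu.le]
  calc ∫ x, |G (u + δ) x - G u x| * |x| ^ α
      ≤ ∫ x, (c₁ * (G (2 * u) x * |x| ^ (α + 2)) + c₂ * (G (2 * u) x * |x| ^ α)) := by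
        refine integral_mono_of_nonneg (.of_forall fun x => by positivity) (hint₁.add hint₂)
          (.of_forall fun x => ?_)
        have hsplit : |x| ^ (α + 2) = |x| ^ α * x ^ 2 := by
          rw [rpow_add' (abs_nonneg x) (by linarith), rpow_two, sq_abs]
        calc |G (u + δ) x - G u x| * |x| ^ α
            ≤ δ * (√2 * G (2 * u) x * (x ^ 2 / (4 * u ^ 2) + 1 / (2 * u))) * |x| ^ α := by
              gcongr; exact abs_G_add_sub_G_le hu hδ hδu x
          _ = c₁ * (G (2 * u) x * |x| ^ (α + 2)) + c₂ * (G (2 * u) x * |x| ^ α) := by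
              rw [hsplit]; ring
    _ = c₁ * (heatMoment (α + 2) * (2 * u) ^ ((α + 2) / 2))
          + c₂ * (heatMoment α * (2 * u) ^ (α / 2)) := by
        rw [integral_add hint₁ hint₂, integral_const_mul, integral_const_mul,
          integral_G_mul_abs_rpow h2u hα2, integral_G_mul_abs_rpow h2u hα]
    _ = _ := by
        rw [hpow, mul_rpow zero_le_two hu.le, rpow_sub_one hu.ne']
        simp only [c₁, c₂]
        field_simp
        ring

lemma exists_integral_abs_G_add_sub_G_mul_le {α : ℝ} (hα : 0 ≤ α) :
    ∃ C, ∀ u δ : ℝ, 0 < u → 0 < δ →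
      ∫ x, |G (u + δ) x - G u x| * |x| ^ α ≤ C * δ * max u δ ^ (α / 2 - 1) := by
  set C₁ := 2 * heatMoment α * 2 ^ (α / 2)
  set C₂ := √2 * 2 ^ (α / 2) * (heatMoment (α + 2) + heatMoment α) / 2
  refine ⟨max C₁ C₂, fun u δ hu hδ => ?_⟩
  rcases le_total u δ with huδ | hδu
  · rw [max_eq_right huδ]
    calc ∫ x, |G (u + δ) x - G u x| * |x| ^ α
        ≤ 2 * heatMoment α * (2 * δ) ^ (α / 2) :=
          integral_abs_G_add_sub_G_mul_le_of_le hα hu huδ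
      _ = C₁ * δ * δ ^ (α / 2 - 1) := by
          rw [mul_rpow zero_le_two hδ.le, rpow_sub_one hδ.ne']
          field_simp
          ring
      _ ≤ max C₁ C₂ * δ * δ ^ (α / 2 - 1) := by gcongr; exact le_max_left _ _
  · rw [max_eq_left hδu]
    calc ∫ x, |G (u + δ) x - G u x| * |x| ^ α
        ≤ C₂ * δ * u ^ (α / 2 - 1) :=
          integral_abs_G_add_sub_G_mul_le_of_ge (by linarith) hu hδ.le hδu
      _ ≤ max C₁ C₂ * δ * u ^ (α / 2 - 1) := by gcongr; exact le_max_right _ _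

lemma integral_max_rpow_le {p δ T : ℝ} (hp : p < -1) (hδ : 0 < δ) (hT : 0 ≤ T) :
    ∫ u in (0:ℝ)..T, max u δ ^ p ≤ δ ^ (p + 1) * (p / (p + 1)) := by
  set T' := max T δ
  have hδT' : δ ≤ T' := le_max_right T δ
  have hcont : Continuous fun u : ℝ => max u δ ^ p :=
    (continuous_id.max continuous_const).rpow_const
      fun u => Or.inl (hδ.trans_le (le_max_right u δ)).ne'
  have htail : T' ^ (p + 1) / (p + 1) ≤ 0 :=
    div_nonpos_of_nonneg_of_nonpos (by positivity) (by linarith)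
  calc ∫ u in (0:ℝ)..T, max u δ ^ p
      ≤ ∫ u in (0:ℝ)..T', max u δ ^ p :=
        intervalIntegral.integral_mono_interval le_rfl hT (le_max_left T δ)
          (.of_forall fun u => by positivity) (hcont.intervalIntegrable _ _)
    _ = (∫ u in (0:ℝ)..δ, max u δ ^ p) + ∫ u in δ..T', max u δ ^ p :=
        (intervalIntegral.integral_add_adjacent_intervals (hcont.intervalIntegrable _ _)
          (hcont.intervalIntegrable _ _)).symm
    _ = (∫ _ in (0:ℝ)..δ, δ ^ p) + ∫ u in δ..T', u ^ p := by
        congr 1 <;> refine intervalIntegral.integral_congr fun u hu => ?_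
        · rw [uIcc_of_le hδ.le] at hu
          simp only [max_eq_right hu.2]
        · rw [uIcc_of_le hδT'] at hu
          simp only [max_eq_left hu.1]
    _ = δ * δ ^ p + (T' ^ (p + 1) - δ ^ (p + 1)) / (p + 1) := by
        rw [intervalIntegral.integral_const, integral_rpow (Or.inr ⟨by linarith, ?_⟩)]
        · simp
        · rw [uIcc_of_le hδT']
          exact fun h => (hδ.trans_le h.1).ne rfl
    _ ≤ δ ^ (p + 1) * (p / (p + 1)) := by
        rw [mul_comm δ, ← rpow_add_one hδ.ne', sub_div]
        have : p + 1 ≠ 0 := by linarith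
        have hsplit : δ ^ (p + 1) * (p / (p + 1)) = δ ^ (p + 1) - δ ^ (p + 1) / (p + 1) := by
          field_simp; ring
        linarith

lemma intervalIntegral_le_of_le_mul_max_sub_rpow {f : ℝ → ℝ} {p δ T K : ℝ} (hp : p < -1)
    (hδ : 0 < δ) (hT : 0 ≤ T) (hK : 0 ≤ K) (hf₀ : ∀ s, 0 ≤ f s)
    (hf : ∀ s ∈ Ioo 0 T, f s ≤ K * max (T - s) δ ^ p) :
    ∫ s in (0:ℝ)..T, f s ≤ K * (δ ^ (p + 1) * (p / (p + 1))) := by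
  have hmajorant : Continuous fun s => K * max (T - s) δ ^ p :=
    continuous_const.mul <| ((continuous_const.sub continuous_id).max continuous_const).rpow_const
      fun s => Or.inl (hδ.trans_le (le_max_right _ _)).ne'
  calc ∫ s in (0:ℝ)..T, f s
      ≤ ∫ s in (0:ℝ)..T, K * max (T - s) δ ^ p := by
        simp only [intervalIntegral.integral_of_le hT, integral_Ioc_eq_integral_Ioo]
        exact integral_mono_of_nonneg (.of_forall hf₀)
          (hmajorant.integrableOn_Icc.mono_set Ioo_subset_Icc_self)
          ((ae_restrict_iff' measurableSet_Ioo).mpr (.of_forall hf))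
    _ = K * ∫ u in (0:ℝ)..T, max u δ ^ p := by
        rw [intervalIntegral.integral_comp_sub_left (fun u => K * max u δ ^ p),
          intervalIntegral.integral_const_mul, sub_self, sub_zero]
    _ ≤ K * (δ ^ (p + 1) * (p / (p + 1))) := by
        gcongr
        exact integral_max_rpow_le hp hδ hT

theorem heat_kernel_time_increment_alpha
    (α : ℝ) (hα : 0 ≤ α) (hα1 : α < 1) :
    ∃ C : ℝ, 0 < C ∧ ∀ t₁ t₂ : ℝ, 0 < t₁ → t₁ < t₂ →
      ∫ s in (0:ℝ)..t₁,
          (∫ x : ℝ, |G (t₂ - s) x - G (t₁ - s) x| * |x| ^ α) ^ 2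
        ≤ C * (t₂ - t₁) ^ (1 + α) := by
  obtain ⟨C, hC⟩ := exists_integral_abs_G_add_sub_G_mul_le hα
  refine ⟨max (C ^ 2 * ((α - 2) / (α - 1))) 1, by positivity, fun t₁ t₂ ht₁ ht₁₂ => ?_⟩
  set δ := t₂ - t₁
  have hδ : 0 < δ := sub_pos.mpr ht₁₂
  have hpointwise : ∀ s ∈ Ioo 0 t₁,
      (∫ x : ℝ, |G (t₂ - s) x - G (t₁ - s) x| * |x| ^ α) ^ 2
        ≤ C ^ 2 * δ ^ 2 * max (t₁ - s) δ ^ (α - 2) := by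
    intro s hs
    have hmax : 0 < max (t₁ - s) δ := hδ.trans_le (le_max_right _ _)
    rw [show t₂ - s = t₁ - s + δ by ring, show α - 2 = (α / 2 - 1) * (2 : ℕ) by push_cast; ring,
      rpow_mul_natCast hmax.le, ← mul_pow, ← mul_pow]
    exact pow_le_pow_left₀ (integral_nonneg fun x => by positivity)
      (hC _ _ (by linarith [hs.2]) hδ) 2
  calc ∫ s in (0:ℝ)..t₁, (∫ x : ℝ, |G (t₂ - s) x - G (t₁ - s) x| * |x| ^ α) ^ 2
      ≤ C ^ 2 * δ ^ 2 * (δ ^ (α - 2 + 1) * ((α - 2) / (α - 2 + 1))) :=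
        intervalIntegral_le_of_le_mul_max_sub_rpow (by linarith) hδ ht₁.le (by positivity)
          (fun s => sq_nonneg _) hpointwise
    _ = C ^ 2 * ((α - 2) / (α - 1)) * δ ^ (1 + α) := by
        rw [show α - 2 + 1 = α - 1 by ring, show 1 + α = 2 + (α - 1) by ring,
          rpow_add hδ, rpow_two]
        ring
    _ ≤ max (C ^ 2 * ((α - 2) / (α - 1))) 1 * δ ^ (1 + α) := by
        gcongr
        exact le_max_left _ _
end

section
/- Let q > 2 and let f ∈ L^q(ℝ) be non-negative. Then there exists a constant C, depending only on q, such that for all t > 0, all ε > 0 and all x ∈ ℝ one has ∫₀^{t} ∫_ℝ ( G_{t+ε−s}(x−y) − G_{t−s}(x−y) )² f(y)² dy ds ≤ C ‖f‖²_{L^q(ℝ)} ε^{1/2 − 1/q}. -/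
/-!
Fix `s` and write `τ = t - s`. Hölder's inequality with exponents `p = q/(q-2)` and `q/2` splits
off `‖f‖_q²` and leaves `‖G (τ + ε) - G τ‖²_{L^{2p}}`, where `1/(2p) = σ := 1/2 - 1/q`. For
`τ ≤ ε` we bound the two kernels separately and get `≲ τ^(σ-1)`; for `τ > ε` the mean value
theorem in time, with `|∂ₜG(τ', z)| ≲ τ^(-3/2) e^(-z²/(16τ))` for `τ' ∈ [τ, 2τ]`, gives
`≲ ε² τ^(σ-3)`. Since `0 < σ < 1`, the first profile is integrable near `0` and the second
near `∞`, and both integrals are `≲ ε^σ`.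
-/

open MeasureTheory Real Filter

open Set

lemma G_nonneg {t : ℝ} (ht : 0 < t) (x : ℝ) : 0 ≤ G t x := by
  unfold G; positivity

@[fun_prop]
lemma measurable_G_uncurry : Measurable fun p : ℝ × ℝ => G p.1 p.2 := by
  unfold G; fun_prop

lemma ofReal_integral_le_lintegral_ofReal {α : Type*} [MeasurableSpace α] {μ : Measure α}
    {f : α → ℝ} (hf : 0 ≤ f) :
    ENNReal.ofReal (∫ a, f a ∂μ) ≤ ∫⁻ a, ENNReal.ofReal (f a) ∂μ :=
  (Real.ofReal_le_enorm _).trans <| (enorm_integral_le_lintegral_enorm f).trans_eq <|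
    lintegral_congr fun a => Real.enorm_of_nonneg (hf a)

lemma lintegral_ofReal_mul_exp_neg_mul_sq {c K : ℝ} (hc : 0 < c) (hK : 0 ≤ K) :
    ∫⁻ z : ℝ, ENNReal.ofReal (K * exp (-c * z ^ 2)) = ENNReal.ofReal (K * √(π / c)) := by
  rw [← ofReal_integral_eq_lintegral_ofReal ((integrable_exp_neg_mul_sq hc).const_mul K)
      (Eventually.of_forall fun z => by positivity),
    integral_const_mul, integral_gaussian]

lemma G_rpow {t : ℝ} (ht : 0 < t) (ρ z : ℝ) :
    G t z ^ ρ = (4 * π * t) ^ (-ρ / 2) * exp (-(ρ / (4 * t)) * z ^ 2) := by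
  unfold G
  rw [mul_rpow (by positivity) (exp_pos _).le, ← rpow_mul (by positivity), ← exp_mul]
  congr 2 <;> ring

lemma lintegral_G_rpow_le {t ρ : ℝ} (ht : 0 < t) (hρ : 1 ≤ ρ) :
    ∫⁻ z : ℝ, ENNReal.ofReal (G t z ^ ρ) ≤ ENNReal.ofReal (t ^ ((1 - ρ) / 2)) := by
  have h4πt : 0 < 4 * π * t := by positivity
  simp_rw [G_rpow ht]
  rw [lintegral_ofReal_mul_exp_neg_mul_sq (by positivity) (by positivity)]
  refine ENNReal.ofReal_le_ofReal ?_
  have hsqrt : √(π / (ρ / (4 * t))) ≤ (4 * π * t) ^ (1 / 2 : ℝ) := by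
    rw [← sqrt_eq_rpow]
    refine sqrt_le_sqrt ?_
    rw [div_div_eq_mul_div, div_le_iff₀ (by linarith)]
    nlinarith [pi_pos]
  calc (4 * π * t) ^ (-ρ / 2) * √(π / (ρ / (4 * t)))
      ≤ (4 * π * t) ^ (-ρ / 2) * (4 * π * t) ^ (1 / 2 : ℝ) := by gcongr
    _ = (4 * π * t) ^ ((1 - ρ) / 2) := by rw [← rpow_add h4πt]; ring_nf
    _ ≤ t ^ ((1 - ρ) / 2) := rpow_le_rpow_of_nonpos ht (by nlinarith [pi_gt_three]) (by linarith)

lemma abs_sub_rpow_le_rpow_add_rpow {a b ρ : ℝ} (ha : 0 ≤ a) (hb : 0 ≤ b) (hρ : 0 ≤ ρ) :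
    |a - b| ^ ρ ≤ a ^ ρ + b ^ ρ := by
  have hmax : |a - b| ≤ max a b :=
    abs_sub_le_iff.2 ⟨by linarith [le_max_left a b], by linarith [le_max_right a b]⟩
  calc |a - b| ^ ρ ≤ max a b ^ ρ := rpow_le_rpow (abs_nonneg _) hmax hρ
    _ ≤ a ^ ρ + b ^ ρ := by
      rcases max_choice a b with h | h <;> rw [h] <;> linarith [rpow_nonneg ha ρ, rpow_nonneg hb ρ]

lemma lintegral_abs_G_sub_G_rpow_le {s t ρ : ℝ} (ht : 0 < t) (hts : t ≤ s) (hρ : 1 ≤ ρ) :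
    ∫⁻ z : ℝ, ENNReal.ofReal (|G s z - G t z| ^ ρ) ≤ ENNReal.ofReal (2 * t ^ ((1 - ρ) / 2)) := by
  have hs := ht.trans_le hts
  calc ∫⁻ z : ℝ, ENNReal.ofReal (|G s z - G t z| ^ ρ)
      ≤ ∫⁻ z : ℝ, (ENNReal.ofReal (G s z ^ ρ) + ENNReal.ofReal (G t z ^ ρ)) :=
        lintegral_mono fun z => by
          rw [← ENNReal.ofReal_add (rpow_nonneg (G_nonneg hs z) ρ) (rpow_nonneg (G_nonneg ht z) ρ)]
          exact ENNReal.ofReal_le_ofReal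
            (abs_sub_rpow_le_rpow_add_rpow (G_nonneg hs z) (G_nonneg ht z) (by linarith))
    _ = (∫⁻ z : ℝ, ENNReal.ofReal (G s z ^ ρ)) + ∫⁻ z : ℝ, ENNReal.ofReal (G t z ^ ρ) :=
        lintegral_add_left (by fun_prop) _
    _ ≤ ENNReal.ofReal (s ^ ((1 - ρ) / 2)) + ENNReal.ofReal (t ^ ((1 - ρ) / 2)) :=
        add_le_add (lintegral_G_rpow_le hs hρ) (lintegral_G_rpow_le ht hρ)
    _ ≤ ENNReal.ofReal (t ^ ((1 - ρ) / 2)) + ENNReal.ofReal (t ^ ((1 - ρ) / 2)) :=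
        add_le_add (ENNReal.ofReal_le_ofReal (rpow_le_rpow_of_nonpos ht hts (by linarith))) le_rfl
    _ = ENNReal.ofReal (2 * t ^ ((1 - ρ) / 2)) := by
        rw [two_mul, ENNReal.ofReal_add (rpow_nonneg ht.le _) (rpow_nonneg ht.le _)]

noncomputable def timeDerivG (t z : ℝ) : ℝ := G t z * (z ^ 2 / (4 * t ^ 2) - 1 / (2 * t))

lemma hasDerivAt_G_s11 {t : ℝ} (ht : 0 < t) (z : ℝ) :
    HasDerivAt (fun s => G s z) (timeDerivG t z) t := by
  have h4πt : 0 < 4 * π * t := by positivity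
  have hpow := ((hasDerivAt_id t).const_mul (4 * π)).rpow_const (p := -(1:ℝ) / 2)
    (Or.inl (by simpa using h4πt.ne'))
  have hexp : HasDerivAt (fun s => exp (-z ^ 2 / (4 * s)))
      (exp (-z ^ 2 / (4 * t)) * (z ^ 2 / (4 * t ^ 2))) t := by
    have h := ((hasDerivAt_inv ht.ne').const_mul (-z ^ 2 / 4)).exp
    convert h using 1
    · funext s; congr 1; ring
    · field_simp
  refine (hpow.mul hexp).congr_deriv ?_
  unfold timeDerivG G
  simp only [id]
  rw [rpow_sub_one h4πt.ne']
  field_simp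
  ring

lemma abs_timeDerivG_le {t s z : ℝ} (ht : 0 < t) (hts : t ≤ s) (hst : s ≤ 2 * t) :
    |timeDerivG s z| ≤ 5 * t ^ (-(3:ℝ) / 2) * exp (-z ^ 2 / (16 * t)) := by
  have hs : 0 < s := ht.trans_le hts
  set E := exp (-z ^ 2 / (16 * t))
  have hG : G s z ≤ t ^ (-(1:ℝ) / 2) * E ^ 2 := by
    have hexp : -z ^ 2 / (4 * s) ≤ 2 * (-z ^ 2 / (16 * t)) := by
      have h : z ^ 2 / (8 * t) ≤ z ^ 2 / (4 * s) :=
        div_le_div_of_nonneg_left (sq_nonneg z) (by positivity) (by linarith)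
      linarith [neg_div (4 * s) (z ^ 2), show 2 * (-z ^ 2 / (16 * t)) = -(z ^ 2 / (8 * t)) by ring]
    unfold G
    refine mul_le_mul (rpow_le_rpow_of_nonpos ht (by nlinarith [pi_gt_three]) (by norm_num))
      ?_ (exp_pos _).le (by positivity)
    rw [← exp_nat_mul]
    exact exp_le_exp.2 (by exact_mod_cast hexp)
  have hfactor : |z ^ 2 / (4 * s ^ 2) - 1 / (2 * s)| ≤ z ^ 2 / (4 * t ^ 2) + 1 / (2 * t) := by
    refine (abs_sub _ _).trans ?_
    rw [abs_of_nonneg (by positivity), abs_of_nonneg (by positivity)]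
    gcongr
  -- `u e^{-u} ≤ 1` with `u = z²/(16t)` absorbs the polynomial factor into one copy of `E`.
  have habsorb : z ^ 2 / (4 * t ^ 2) * E ≤ 4 / t := by
    have h := (mul_exp_neg_le_exp_neg_one (z ^ 2 / (16 * t))).trans (exp_le_one_iff.2 (by norm_num))
    have hE : E = exp (-(z ^ 2 / (16 * t))) := by simp only [E, neg_div]
    rw [hE, show z ^ 2 / (4 * t ^ 2) = 4 / t * (z ^ 2 / (16 * t)) by field_simp; ring, mul_assoc]
    exact mul_le_of_le_one_right (by positivity) h
  have hE1 : E ≤ 1 :=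
    exp_le_one_iff.2 (div_nonpos_of_nonpos_of_nonneg (by nlinarith) (by positivity))
  calc |timeDerivG s z| = G s z * |z ^ 2 / (4 * s ^ 2) - 1 / (2 * s)| := by
        rw [timeDerivG, abs_mul, abs_of_nonneg (G_nonneg hs z)]
    _ ≤ t ^ (-(1:ℝ) / 2) * E ^ 2 * (z ^ 2 / (4 * t ^ 2) + 1 / (2 * t)) := by
        gcongr
    _ = t ^ (-(1:ℝ) / 2) * E * (z ^ 2 / (4 * t ^ 2) * E + E / (2 * t)) := by ring
    _ ≤ t ^ (-(1:ℝ) / 2) * E * (4 / t + 1 / t) := by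
        gcongr
        linarith
    _ = 5 * t ^ (-(3:ℝ) / 2) * E := by
        rw [show (-(3:ℝ) / 2) = -(1:ℝ) / 2 - 1 by norm_num, rpow_sub_one ht.ne']
        ring

lemma abs_G_add_sub_G_le_s11 {t ε : ℝ} (ht : 0 < t) (hε : 0 < ε) (hεt : ε ≤ t) (z : ℝ) :
    |G (t + ε) z - G t z| ≤ 5 * t ^ (-(3:ℝ) / 2) * exp (-z ^ 2 / (16 * t)) * ε := by
  have h := (convex_Icc t (t + ε)).norm_image_sub_le_of_norm_hasDerivWithin_le
    (f := fun s => G s z) (fun s hs => (hasDerivAt_G_s11 (ht.trans_le hs.1) z).hasDerivWithinAt)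
    (fun s hs => abs_timeDerivG_le ht hs.1 (by linarith [hs.2]))
    (left_mem_Icc.2 (by linarith)) (right_mem_Icc.2 (by linarith))
  simpa [Real.norm_eq_abs, abs_of_pos hε] using h

lemma lintegral_abs_G_add_sub_G_rpow_le {t ε ρ : ℝ} (ht : 0 < t) (hε : 0 < ε) (hεt : ε ≤ t)
    (hρ : 1 ≤ ρ) :
    ∫⁻ z : ℝ, ENNReal.ofReal (|G (t + ε) z - G t z| ^ ρ)
      ≤ ENNReal.ofReal (8 * (5 * ε) ^ ρ * t ^ ((1 - 3 * ρ) / 2)) := by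
  set K := (5 * ε * t ^ (-(3:ℝ) / 2)) ^ ρ with hK
  have hpoint : ∀ z : ℝ, |G (t + ε) z - G t z| ^ ρ ≤ K * exp (-(ρ / (16 * t)) * z ^ 2) := by
    intro z
    calc |G (t + ε) z - G t z| ^ ρ
        ≤ (5 * t ^ (-(3:ℝ) / 2) * exp (-z ^ 2 / (16 * t)) * ε) ^ ρ :=
          rpow_le_rpow (abs_nonneg _) (abs_G_add_sub_G_le_s11 ht hε hεt z) (by linarith)
      _ = K * exp (-(ρ / (16 * t)) * z ^ 2) := by
          rw [show 5 * t ^ (-(3:ℝ) / 2) * exp (-z ^ 2 / (16 * t)) * ε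
              = 5 * ε * t ^ (-(3:ℝ) / 2) * exp (-z ^ 2 / (16 * t)) by ring,
            mul_rpow (by positivity) (exp_pos _).le, ← exp_mul]
          congr 2
          ring
  have hsqrt : √(π / (ρ / (16 * t))) ≤ 8 * t ^ (1 / 2 : ℝ) := by
    rw [← sqrt_eq_rpow, show (8:ℝ) = √(8 ^ 2) by simp, ← sqrt_mul (by norm_num)]
    refine sqrt_le_sqrt ?_
    rw [div_div_eq_mul_div, div_le_iff₀ (by linarith)]
    nlinarith [pi_lt_four]
  calc ∫⁻ z : ℝ, ENNReal.ofReal (|G (t + ε) z - G t z| ^ ρ)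
      ≤ ∫⁻ z : ℝ, ENNReal.ofReal (K * exp (-(ρ / (16 * t)) * z ^ 2)) :=
        lintegral_mono fun z => ENNReal.ofReal_le_ofReal (hpoint z)
    _ = ENNReal.ofReal (K * √(π / (ρ / (16 * t)))) :=
        lintegral_ofReal_mul_exp_neg_mul_sq (by positivity) (by positivity)
    _ ≤ ENNReal.ofReal (8 * (5 * ε) ^ ρ * t ^ ((1 - 3 * ρ) / 2)) := by
        refine ENNReal.ofReal_le_ofReal
          ((mul_le_mul_of_nonneg_left hsqrt (by positivity)).trans_eq ?_)
        rw [hK, mul_rpow (by positivity) (by positivity), ← rpow_mul ht.le,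
          show (1 - 3 * ρ) / 2 = -(3:ℝ) / 2 * ρ + 1 / 2 by ring, rpow_add ht]
        ring

noncomputable def shiftProfile (σ ε t : ℝ) : ℝ :=
  if t ≤ ε then 2 * t ^ (σ - 1) else 200 * ε ^ 2 * t ^ (σ - 3)

lemma mul_rpow_one_div_le {k x p : ℝ} (hk : 1 ≤ k) (hx : 0 ≤ x) (hp : 1 ≤ p) :
    (k * x) ^ (1 / p) ≤ k * x ^ (1 / p) := by
  rw [mul_rpow (by linarith) hx]
  gcongr
  exact rpow_le_self_of_one_le hk (by rw [div_le_one (by linarith)]; exact hp)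

lemma lintegral_abs_G_shift_rpow_le_shiftProfile {t ε p : ℝ} (ht : 0 < t) (hε : 0 < ε)
    (hp : 1 ≤ p) :
    (∫⁻ z : ℝ, ENNReal.ofReal (|G (t + ε) z - G t z| ^ (2 * p))) ^ (1 / p)
      ≤ ENNReal.ofReal (shiftProfile (1 / (2 * p)) ε t) := by
  have h1p : 0 ≤ 1 / p := by positivity
  unfold shiftProfile
  split_ifs with htε
  · calc (∫⁻ z : ℝ, ENNReal.ofReal (|G (t + ε) z - G t z| ^ (2 * p))) ^ (1 / p)
        ≤ ENNReal.ofReal (2 * t ^ ((1 - 2 * p) / 2)) ^ (1 / p) :=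
          ENNReal.rpow_le_rpow (lintegral_abs_G_sub_G_rpow_le ht (by linarith) (by linarith)) h1p
      _ = ENNReal.ofReal ((2 * t ^ ((1 - 2 * p) / 2)) ^ (1 / p)) :=
          ENNReal.ofReal_rpow_of_nonneg (by positivity) h1p
      _ ≤ ENNReal.ofReal (2 * t ^ (1 / (2 * p) - 1)) := by
          refine ENNReal.ofReal_le_ofReal
            ((mul_rpow_one_div_le one_le_two (by positivity) hp).trans_eq ?_)
          rw [← rpow_mul ht.le]
          congr 2
          field_simp
  · calc (∫⁻ z : ℝ, ENNReal.ofReal (|G (t + ε) z - G t z| ^ (2 * p))) ^ (1 / p)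
        ≤ ENNReal.ofReal (8 * ((5 * ε) ^ (2 * p) * t ^ ((1 - 3 * (2 * p)) / 2))) ^ (1 / p) := by
          rw [← mul_assoc]
          exact ENNReal.rpow_le_rpow
            (lintegral_abs_G_add_sub_G_rpow_le ht hε (by linarith) (by linarith)) h1p
      _ = ENNReal.ofReal ((8 * ((5 * ε) ^ (2 * p) * t ^ ((1 - 3 * (2 * p)) / 2))) ^ (1 / p)) :=
          ENNReal.ofReal_rpow_of_nonneg (by positivity) h1p
      _ ≤ ENNReal.ofReal (200 * ε ^ 2 * t ^ (1 / (2 * p) - 3)) := by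
          refine ENNReal.ofReal_le_ofReal
            ((mul_rpow_one_div_le (by norm_num) (by positivity) hp).trans_eq ?_)
          rw [mul_rpow (by positivity) (by positivity), ← rpow_mul (by positivity),
            ← rpow_mul ht.le, show 2 * p * (1 / p) = ((2 : ℕ) : ℝ) by field_simp; norm_num,
            rpow_natCast, show (1 - 3 * (2 * p)) / 2 * (1 / p) = 1 / (2 * p) - 3 by field_simp]
          ring

lemma lintegral_sq_mul_sq_le {α : Type*} [MeasurableSpace α] (μ : Measure α) {p q : ℝ}
    (hpq : p.HolderConjugate (q / 2)) {g f : α → ℝ} (hg : AEMeasurable g μ)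
    (hf : AEMeasurable f μ) (hf0 : 0 ≤ f) (hfq : Integrable (fun y => f y ^ q) μ) :
    ∫⁻ y, ENNReal.ofReal (g y ^ 2 * f y ^ 2) ∂μ
      ≤ (∫⁻ y, ENNReal.ofReal (|g y| ^ (2 * p)) ∂μ) ^ (1 / p)
        * ENNReal.ofReal (((∫ y, f y ^ q ∂μ) ^ (1 / q)) ^ 2) := by
  have hq : 0 < q := by linarith [hpq.symm.pos]
  have hg_pow : ∀ y, ENNReal.ofReal (g y ^ 2) ^ p = ENNReal.ofReal (|g y| ^ (2 * p)) := by
    intro y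
    rw [ENNReal.ofReal_rpow_of_nonneg (sq_nonneg _) hpq.nonneg, ← sq_abs, ← rpow_natCast,
      ← rpow_mul (abs_nonneg _)]
    norm_num
  have hf_pow : ∀ y, ENNReal.ofReal (f y ^ 2) ^ (q / 2) = ENNReal.ofReal (f y ^ q) := by
    intro y
    rw [ENNReal.ofReal_rpow_of_nonneg (sq_nonneg _) (by positivity), ← rpow_natCast,
      ← rpow_mul (hf0 y)]
    congr 2
    push_cast
    ring
  have hf_norm : (∫⁻ y, ENNReal.ofReal (f y ^ q) ∂μ) ^ (1 / (q / 2))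
      = ENNReal.ofReal (((∫ y, f y ^ q ∂μ) ^ (1 / q)) ^ 2) := by
    have hfq0 : 0 ≤ fun y => f y ^ q := fun y => rpow_nonneg (hf0 y) q
    rw [← ofReal_integral_eq_lintegral_ofReal hfq (Eventually.of_forall hfq0),
      ENNReal.ofReal_rpow_of_nonneg (integral_nonneg hfq0) (by positivity), ← rpow_natCast,
      ← rpow_mul (integral_nonneg hfq0)]
    congr 2
    push_cast
    field_simp
  calc ∫⁻ y, ENNReal.ofReal (g y ^ 2 * f y ^ 2) ∂μ
      = ∫⁻ y, ((fun y => ENNReal.ofReal (g y ^ 2)) * fun y => ENNReal.ofReal (f y ^ 2)) y ∂μ :=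
        lintegral_congr fun y => ENNReal.ofReal_mul (sq_nonneg _)
    _ ≤ (∫⁻ y, ENNReal.ofReal (g y ^ 2) ^ p ∂μ) ^ (1 / p)
        * (∫⁻ y, ENNReal.ofReal (f y ^ 2) ^ (q / 2) ∂μ) ^ (1 / (q / 2)) :=
        ENNReal.lintegral_mul_le_Lp_mul_Lq μ hpq (by fun_prop) (by fun_prop)
    _ = _ := by simp_rw [hg_pow, hf_pow, hf_norm]

lemma setLIntegral_Ioo_comp_sub_le (g : ℝ → ENNReal) (t : ℝ) :
    ∫⁻ s in Ioo 0 t, g (t - s) ≤ ∫⁻ r in Ioi 0, g r := by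
  calc ∫⁻ s in Ioo 0 t, g (t - s)
      ≤ ∫⁻ s, (Ioi 0).indicator g (t - s) := by
        rw [← lintegral_indicator measurableSet_Ioo]
        refine lintegral_mono fun s => ?_
        by_cases hs : s ∈ Ioo 0 t
        · rw [indicator_of_mem hs, indicator_of_mem (show t - s ∈ Ioi 0 from sub_pos.2 hs.2)]
        · rw [indicator_of_notMem hs]
          exact zero_le
    _ = ∫⁻ r in Ioi 0, g r := by
        rw [lintegral_sub_left_eq_self, lintegral_indicator measurableSet_Ioi]

lemma lintegral_shiftProfile_le {σ ε : ℝ} (hσ : 0 < σ) (hσ1 : σ ≤ 1) (hε : 0 < ε) :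
    ∫⁻ t in Ioi 0, ENNReal.ofReal (shiftProfile σ ε t)
      ≤ ENNReal.ofReal ((2 / σ + 200) * ε ^ σ) := by
  have hnear : ∫⁻ t in Ioc 0 ε, ENNReal.ofReal (shiftProfile σ ε t)
      = ENNReal.ofReal (2 / σ * ε ^ σ) := by
    rw [setLIntegral_congr_fun measurableSet_Ioc fun t ht => by rw [shiftProfile, if_pos ht.2],
      ← ofReal_integral_eq_lintegral_ofReal, ← intervalIntegral.integral_of_le hε.le,
      intervalIntegral.integral_const_mul, integral_rpow (Or.inl (by linarith))]
    · rw [sub_add_cancel, zero_rpow hσ.ne']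
      ring_nf
    · exact (intervalIntegral.intervalIntegrable_rpow' (by linarith)).const_mul 2
        |>.1
    · exact (ae_restrict_iff' measurableSet_Ioc).2 (ae_of_all _ fun t ht => by
        have := ht.1; positivity)
  have hfar : ∫⁻ t in Ioi ε, ENNReal.ofReal (shiftProfile σ ε t)
      ≤ ENNReal.ofReal (200 * ε ^ σ) := by
    rw [setLIntegral_congr_fun measurableSet_Ioi fun t ht => by
        rw [shiftProfile, if_neg (not_le.2 ht)],
      ← ofReal_integral_eq_lintegral_ofReal, integral_const_mul,
      integral_Ioi_rpow_of_lt (by linarith) hε]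
    · refine ENNReal.ofReal_le_ofReal ?_
      have hpow : ε ^ 2 * ε ^ (-(2 - σ)) = ε ^ σ := by
        rw [← rpow_natCast, ← rpow_add hε]
        norm_num
      rw [show σ - 3 + 1 = -(2 - σ) by ring, div_neg, neg_div, neg_neg, mul_div_assoc', mul_assoc,
        hpow]
      exact div_le_self (by positivity) (by linarith)
    · exact (integrableOn_Ioi_rpow_of_lt (by linarith) hε).const_mul _
    · exact (ae_restrict_iff' measurableSet_Ioi).2 (ae_of_all _ fun t ht => by
        have := hε.trans ht; positivity)
  calc ∫⁻ t in Ioi 0, ENNReal.ofReal (shiftProfile σ ε t)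
      = (∫⁻ t in Ioc 0 ε, ENNReal.ofReal (shiftProfile σ ε t))
        + ∫⁻ t in Ioi ε, ENNReal.ofReal (shiftProfile σ ε t) := by
        rw [← Ioc_union_Ioi_eq_Ioi hε.le, lintegral_union measurableSet_Ioi Ioc_disjoint_Ioi_same]
    _ ≤ ENNReal.ofReal (2 / σ * ε ^ σ) + ENNReal.ofReal (200 * ε ^ σ) := by
        rw [hnear]; gcongr
    _ = ENNReal.ofReal ((2 / σ + 200) * ε ^ σ) := by
        rw [← ENNReal.ofReal_add (by positivity) (by positivity), add_mul]

lemma lintegral_G_shift_sq_mul_sq_le {q : ℝ} (hq : 2 < q) {f : ℝ → ℝ} (hfm : Measurable f)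
    (hf0 : 0 ≤ f) (hfq : Integrable (fun y => f y ^ q)) {τ ε : ℝ} (hτ : 0 < τ) (hε : 0 < ε)
    (x : ℝ) :
    ∫⁻ y, ENNReal.ofReal ((G (τ + ε) (x - y) - G τ (x - y)) ^ 2 * f y ^ 2)
      ≤ ENNReal.ofReal (shiftProfile (1 / 2 - 1 / q) ε τ)
        * ENNReal.ofReal (((∫ y, f y ^ q) ^ (1 / q)) ^ 2) := by
  have hpq : (q / (q - 2)).HolderConjugate (q / 2) :=
    Real.holderConjugate_iff.2 ⟨by rw [lt_div_iff₀ (by linarith)]; linarith, by field_simp; ring⟩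
  have hpσ : 1 / (2 * (q / (q - 2))) = 1 / 2 - 1 / q := by field_simp
  refine (lintegral_sq_mul_sq_le volume hpq (by fun_prop) hfm.aemeasurable hf0 hfq).trans ?_
  rw [lintegral_sub_left_eq_self (fun z => ENNReal.ofReal (|G (τ + ε) z - G τ z| ^ _)) x, ← hpσ]
  gcongr
  exact lintegral_abs_G_shift_rpow_le_shiftProfile hτ hε hpq.lt.le

lemma intervalIntegral_le_of_setLIntegral_Ioo_le {F : ℝ → ℝ} (hF : 0 ≤ F) {t M : ℝ}
    (ht : 0 ≤ t) (hM : 0 ≤ M) (h : ∫⁻ s in Ioo 0 t, ENNReal.ofReal (F s) ≤ ENNReal.ofReal M) :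
    ∫ s in (0:ℝ)..t, F s ≤ M := by
  rw [intervalIntegral.integral_of_le ht, integral_Ioc_eq_integral_Ioo]
  exact (ENNReal.ofReal_le_ofReal_iff hM).1 ((ofReal_integral_le_lintegral_ofReal hF).trans h)

theorem heat_kernel_epsilon_shift_estimate
    (q : ℝ) (hq : 2 < q) (f : ℝ → ℝ) (hfm : Measurable f) (hf0 : ∀ y, 0 ≤ f y)
    (hfq : MeasureTheory.Integrable (fun y => f y ^ q)) :
    ∃ C : ℝ, 0 < C ∧ ∀ t ε x : ℝ, 0 < t → 0 < ε →
      ∫ s in (0:ℝ)..t, ∫ y : ℝ,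
          (G (t + ε - s) (x - y) - G (t - s) (x - y)) ^ 2 * f y ^ 2
        ≤ C * ((∫ y : ℝ, f y ^ q) ^ (1/q)) ^ 2 * ε ^ ((1:ℝ)/2 - 1/q) := by
  set σ : ℝ := 1 / 2 - 1 / q with hσ_def
  have hq_inv : 0 < 1 / q ∧ 1 / q < 1 / 2 := ⟨by positivity, by gcongr⟩
  have hσ : 0 < σ := by linarith [hq_inv.2]
  have hσ_le : σ ≤ 1 := by linarith [hq_inv.1]
  refine ⟨2 / σ + 200, by positivity, fun t ε x ht hε => ?_⟩
  set A := ((∫ y : ℝ, f y ^ q) ^ (1 / q)) ^ 2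
  refine intervalIntegral_le_of_setLIntegral_Ioo_le
    (fun s => integral_nonneg fun y => by positivity) ht.le (by positivity) ?_
  calc ∫⁻ s in Ioo 0 t, ENNReal.ofReal (∫ y : ℝ,
        (G (t + ε - s) (x - y) - G (t - s) (x - y)) ^ 2 * f y ^ 2)
      ≤ ∫⁻ s in Ioo 0 t, ENNReal.ofReal (shiftProfile σ ε (t - s)) * ENNReal.ofReal A :=
        setLIntegral_mono' measurableSet_Ioo fun s hs => by
          rw [show t + ε - s = t - s + ε by ring]
          exact (ofReal_integral_le_lintegral_ofReal fun y => by positivity).trans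
            (lintegral_G_shift_sq_mul_sq_le hq hfm hf0 hfq (sub_pos.2 hs.2) hε x)
    _ = (∫⁻ s in Ioo 0 t, ENNReal.ofReal (shiftProfile σ ε (t - s))) * ENNReal.ofReal A :=
        lintegral_mul_const' _ _ ENNReal.ofReal_ne_top
    _ ≤ ENNReal.ofReal ((2 / σ + 200) * ε ^ σ) * ENNReal.ofReal A := by
        gcongr
        exact (setLIntegral_Ioo_comp_sub_le _ t).trans
          (lintegral_shiftProfile_le hσ hσ_le hε)
    _ = ENNReal.ofReal ((2 / σ + 200) * A * ε ^ σ) := by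
        rw [← ENNReal.ofReal_mul (by positivity)]
        ring_nf
end
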